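/- arXiv:1501.04620 — 2 statements merged into one kernel-verified Lean document; each statement's English description precedes it below -/
import Mathlib

section
/- In a σ-generalized (right) Bol loop, the left inverse and right inverse of every element coincide: x^λ = x^ρ for all x. -/
/-- A loop: a magma with two-sided identity whose translations are bijections. -/
structure IsLoop (Q : Type*) [Mul Q] [One Q] : Prop where
  one_mul : ∀ x : Q, 1 * x = x
  mul_one : ∀ x : Q, x * 1 = x
  lbij : ∀ x : Q, Function.Bijective (fun y : Q => x * y)
  rbij : ∀ x : Q, Function.Bijective (fun y : Q => y * x)

/-- Left translation `L x : y ↦ x * y` as a permutation. -/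
noncomputable def Lt {Q : Type*} [Mul Q] [One Q] (h : IsLoop Q) (x : Q) : Equiv.Perm Q :=
  Equiv.ofBijective _ (h.lbij x)

/-- Right translation `R x : y ↦ y * x` as a permutation. -/
noncomputable def Rt {Q : Type*} [Mul Q] [One Q] (h : IsLoop Q) (x : Q) : Equiv.Perm Q :=
  Equiv.ofBijective _ (h.rbij x)

/-- The right inverse `x^ρ`, the unique solution of `x * x^ρ = 1`. -/
noncomputable def rinv {Q : Type*} [Mul Q] [One Q] (h : IsLoop Q) (x : Q) : Q :=
  (Lt h x).symm 1

/-- The left inverse `x^λ`, the unique solution of `x^λ * x = 1`. -/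
noncomputable def linv {Q : Type*} [Mul Q] [One Q] (h : IsLoop Q) (x : Q) : Q :=
  (Rt h x).symm 1

/-- σ-generalized (right) Bol identity. -/
def RightBol {Q : Type*} [Mul Q] (σ : Q → Q) : Prop :=
  ∀ x y z : Q, ((x * y) * z) * σ y = x * ((y * z) * σ y)

/-- σ-generalized left Bol identity. -/
def LeftBol {Q : Type*} [Mul Q] (σ : Q → Q) : Prop :=
  ∀ x y z : Q, σ y * (z * (y * x)) = (σ y * (z * y)) * x

/-- `(A,B,C)` is an autotopism: `A x * B y = C (x * y)`. -/
def Autotopism {Q : Type*} [Mul Q] (A B C : Equiv.Perm Q) : Prop :=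
  ∀ x y : Q, A x * B y = C (x * y)

namespace IsLoop

variable {Q : Type*} [Mul Q] [One Q]

theorem linv_mul_self (h : IsLoop Q) (x : Q) : linv h x * x = 1 :=
  (Rt h x).apply_symm_apply 1

theorem mul_rinv_self (h : IsLoop Q) (x : Q) : x * rinv h x = 1 :=
  (Lt h x).apply_symm_apply 1

theorem mul_right_cancel (h : IsLoop Q) {x y z : Q} (hxz : x * z = y * z) : x = y :=
  (h.rbij z).1 hxz

end IsLoop

/-- In a σ-generalized right Bol loop, left and right inverses coincide. -/
theorem stmt2 {Q : Type*} [Mul Q] [One Q] (h : IsLoop Q) (σ : Q → Q)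
    (hB : RightBol σ) : ∀ x : Q, linv h x = rinv h x := by
  intro x
  -- The Bol identity at `(x^λ, x, x^ρ)` collapses to `x^ρ * σ x = x^λ * σ x`.
  have hbol := hB (linv h x) x (rinv h x)
  rw [h.linv_mul_self, h.mul_rinv_self, h.one_mul, h.one_mul] at hbol
  exact (h.mul_right_cancel hbol).symm
end

section
/- In a σ-generalized (right) Bol loop, ((x·y)·σ(x))^{-1} = (σ(x)^{-1}·y^{-1})·x^{-1} for all x,y, where z^{-1} denotes the two-sided inverse (which exists since x^λ = x^ρ). -/
/-! Taking `z = y^ρ` in the Bol identity and cancelling `σ y` on the right gives the right inverse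
property `(a·y)·y^ρ = a`. It forces `y^λ = y^ρ` and `(y^ρ)^ρ = y`. The claim is then a single
instance of the Bol identity: with `w = (σ(x)⁻¹·y⁻¹)·x⁻¹` in the first slot, the right inverse
property collapses `((w·x)·y)·σ(x)` to `σ(x)⁻¹·σ(x) = 1`, so `w` is a left inverse of
`(x·y)·σ(x)`, which is also its right inverse. -/

namespace IsLoop

variable {Q : Type*} [Mul Q] [One Q] (h : IsLoop Q)

theorem mul_rinv (x : Q) : x * rinv h x = 1 :=
  (Lt h x).apply_symm_apply 1

theorem linv_mul (x : Q) : linv h x * x = 1 :=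
  (Rt h x).apply_symm_apply 1

theorem linv_eq_of_mul_eq_one_left {x w : Q} (hw : w * x = 1) : linv h x = w :=
  (h.rbij x).injective ((h.linv_mul x).trans hw.symm)

theorem mul_rinv_cancel_right {σ : Q → Q} (hB : RightBol σ) (a x : Q) :
    a * x * rinv h x = a := by
  have hBol := hB a x (rinv h x)
  rw [h.mul_rinv, h.one_mul] at hBol
  exact (h.rbij (σ x)).injective hBol

theorem linv_eq_rinv {σ : Q → Q} (hB : RightBol σ) (x : Q) : linv h x = rinv h x := by
  simpa only [h.linv_mul, h.one_mul] using (h.mul_rinv_cancel_right hB (linv h x) x).symm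

theorem rinv_mul {σ : Q → Q} (hB : RightBol σ) (x : Q) : rinv h x * x = 1 := by
  rw [← h.linv_eq_rinv hB, h.linv_mul]

theorem rinv_eq_of_mul_eq_one_left {σ : Q → Q} (hB : RightBol σ) {x w : Q} (hw : w * x = 1) :
    rinv h x = w := by
  rw [← h.linv_eq_rinv hB, h.linv_eq_of_mul_eq_one_left hw]

theorem rinv_rinv {σ : Q → Q} (hB : RightBol σ) (x : Q) : rinv h (rinv h x) = x :=
  h.rinv_eq_of_mul_eq_one_left hB (h.mul_rinv x)

theorem rinv_mul_cancel_right {σ : Q → Q} (hB : RightBol σ) (a x : Q) :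
    a * rinv h x * x = a := by
  simpa only [h.rinv_rinv hB] using h.mul_rinv_cancel_right hB a (rinv h x)

end IsLoop

/-- In a σ-generalized right Bol loop,
`((x·y)·σ(x))⁻¹ = (σ(x)⁻¹ · y⁻¹) · x⁻¹` (inverses are two-sided). -/
theorem stmt4 {Q : Type*} [Mul Q] [One Q] (h : IsLoop Q) (σ : Q → Q)
    (hB : RightBol σ) :
    ∀ x y : Q, rinv h ((x * y) * σ x) = (rinv h (σ x) * rinv h y) * rinv h x := by
  intro x y
  apply h.rinv_eq_of_mul_eq_one_left hB
  calc rinv h (σ x) * rinv h y * rinv h x * (x * y * σ x)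
      = rinv h (σ x) * rinv h y * rinv h x * x * y * σ x := (hB _ x y).symm
    _ = rinv h (σ x) * σ x := by
      rw [h.rinv_mul_cancel_right hB, h.rinv_mul_cancel_right hB]
    _ = 1 := h.rinv_mul hB (σ x)
end
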